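/- arXiv:1508.00999 — 4 statements merged into one kernel-verified Lean document; each statement's English description precedes it below -/
import Mathlib

section
/- For every real a ≥ 0, every integer n ≥ 1 and every real x ≥ 0, Σ_{k=0}^{∞} k · W_{n,k}^a(x) = n·x + a·x/(1+x). -/
open MeasureTheory Filter

/-- Rising factorial `(n)_i = n(n+1)⋯(n+i−1)`, with `(n)_0 = 1`. -/
noncomputable def risingFac (n i : ℕ) : ℝ := ∏ j ∈ Finset.range i, ((n : ℝ) + j)

/-- `p_k(n,a) = Σ_{i=0}^{k} C(k,i)·(n)_i·a^{k−i}`. -/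
noncomputable def pCoef (n : ℕ) (a : ℝ) (k : ℕ) : ℝ :=
  ∑ i ∈ Finset.range (k + 1), (Nat.choose k i : ℝ) * risingFac n i * a ^ (k - i)

/-- Generalized Baskakov basis function `W_{n,k}^a(x)`. -/
noncomputable def W (n : ℕ) (a : ℝ) (k : ℕ) (x : ℝ) : ℝ :=
  Real.exp (-(a * x) / (1 + x)) * (pCoef n a k / (Nat.factorial k : ℝ)) * x ^ k /
    (1 + x) ^ (k + n)

/-- Stancu-type operator `L_{n,a}^{α,β}(f;x) = Σ_k W_{n,k}^a(x) f((k+α)/(n+β))`. -/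
noncomputable def Lop (n : ℕ) (a α β : ℝ) (f : ℝ → ℝ) (x : ℝ) : ℝ :=
  ∑' k : ℕ, W n a k x * f (((k : ℝ) + α) / ((n : ℝ) + β))

/-- Generalized Baskakov–Kantorovich–Stancu operator `T_{n,a}^{α,β}(f;x)`. -/
noncomputable def TKS (n : ℕ) (a α β : ℝ) (f : ℝ → ℝ) (x : ℝ) : ℝ :=
  ((n : ℝ) + β) *
    ∑' k : ℕ, W n a k x *
      ∫ t in (((k : ℝ) + α) / ((n : ℝ) + β))..(((k : ℝ) + α + 1) / ((n : ℝ) + β)), f t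

/-!
Put `t = x / (1 + x)`, so that `1 - t = (1 + x)⁻¹` and
`W_{n,k}^a(x) = e^{-at} (1 - t)^n p_k(n,a) t^k / k!`. By the binomial theorem `p_k t^k / k!` is the
`k`-th Cauchy coefficient of `u_i = (n)_i t^i / i!` and `v_j = (at)^j / j!`, whose sums are
`(1 - t)^{-n}` and `e^{at}`.
Splitting the weight `k = i + j`, the first moment is `(∑ i u_i)(∑ v_j) + (∑ u_i)(∑ j v_j)`, and each
weighted series is `t` times a shifted series of the same kind:
`∑ i u_i = n t (1 - t)^{-(n+1)}` and `∑ j v_j = at e^{at}`.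
After the factor `e^{-at} (1 - t)^n` cancels, the sum is `n t (1 + x) + a t = n x + a x / (1 + x)`.
-/

open Finset

lemma risingFac_eq_ascFactorial (n i : ℕ) : risingFac n i = n.ascFactorial i := by
  induction i with
  | zero => simp [risingFac]
  | succ i ih =>
    rw [risingFac, prod_range_succ, ← risingFac, ih, Nat.ascFactorial_succ]
    push_cast
    ring

lemma risingFac_succ (n i : ℕ) : risingFac n (i + 1) = n * risingFac (n + 1) i := by
  rw [risingFac_eq_ascFactorial, risingFac_eq_ascFactorial, Nat.ascFactorial_succ,
    ← Nat.succ_ascFactorial]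
  push_cast
  ring

lemma hasSum_risingFac_mul_pow_div_factorial (n : ℕ) {t : ℝ} (ht : ‖t‖ < 1) :
    HasSum (fun i => risingFac n i * t ^ i / i.factorial) ((1 - t)⁻¹ ^ n) := by
  cases n with
  | zero =>
    have h := hasSum_single (f := fun i => risingFac 0 i * t ^ i / i.factorial) 0 fun i hi => by
      obtain ⟨i, rfl⟩ := Nat.exists_eq_succ_of_ne_zero hi
      simp [risingFac, prod_range_succ']
    simpa [risingFac] using h
  | succ m =>
    have h := hasSum_choose_mul_geometric_of_norm_lt_one' m ht
    rw [Ring.inverse_eq_inv'] at h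
    refine h.congr_fun fun i => ?_
    rw [risingFac_eq_ascFactorial, Nat.ascFactorial_eq_factorial_mul_choose, add_comm m,
      ← Nat.choose_symm_add]
    push_cast
    field_simp

lemma hasSum_natCast_mul_pow_div_factorial {c : ℕ → ℝ} {t S : ℝ}
    (h : HasSum (fun m => c (m + 1) * t ^ m / m.factorial) S) :
    HasSum (fun i : ℕ => (i : ℝ) * (c i * t ^ i / i.factorial)) (t * S) := by
  rw [← hasSum_nat_add_iff' 1, sum_range_one, Nat.cast_zero, zero_mul, sub_zero]
  refine (h.mul_left t).congr_fun fun m => ?_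
  rw [Nat.factorial_succ, pow_succ]
  push_cast
  field_simp

lemma hasSum_natCast_mul_risingFac_mul_pow_div_factorial (n : ℕ) {t : ℝ} (ht : ‖t‖ < 1) :
    HasSum (fun i : ℕ => (i : ℝ) * (risingFac n i * t ^ i / i.factorial))
      (n * t * (1 - t)⁻¹ ^ (n + 1)) := by
  have h : HasSum (fun m => risingFac n (m + 1) * t ^ m / m.factorial)
      (n * (1 - t)⁻¹ ^ (n + 1)) :=
    ((hasSum_risingFac_mul_pow_div_factorial (n + 1) ht).mul_left (n : ℝ)).congr_fun
      fun m => by rw [risingFac_succ]; ring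
  convert hasSum_natCast_mul_pow_div_factorial h using 1
  ring

lemma Real.hasSum_pow_div_factorial (y : ℝ) :
    HasSum (fun j => y ^ j / j.factorial) (Real.exp y) := by
  simpa [Real.exp_eq_exp_ℝ] using NormedSpace.expSeries_div_hasSum_exp y

lemma Real.hasSum_natCast_mul_pow_div_factorial (y : ℝ) :
    HasSum (fun j : ℕ => (j : ℝ) * (y ^ j / j.factorial)) (y * Real.exp y) := by
  simpa using _root_.hasSum_natCast_mul_pow_div_factorial (c := fun _ => 1)
    (by simpa using Real.hasSum_pow_div_factorial y)

-- A summable real series is absolutely summable, so Mertens' theorem needs no extra hypothesis.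
lemma hasSum_sum_antidiagonal_mul {f g : ℕ → ℝ} {A B : ℝ} (hf : HasSum f A) (hg : HasSum g B) :
    HasSum (fun k => ∑ p ∈ antidiagonal k, f p.1 * g p.2) (A * B) := by
  have hf' : Summable (‖f ·‖) := hf.summable.abs
  have hg' : Summable (‖g ·‖) := hg.summable.abs
  rw [← hf.tsum_eq, ← hg.tsum_eq, tsum_mul_tsum_eq_tsum_sum_antidiagonal_of_summable_norm hf' hg']
  exact (summable_norm_sum_mul_antidiagonal_of_summable_norm hf' hg').of_norm.hasSum

lemma hasSum_natCast_mul_sum_antidiagonal_mul {f g : ℕ → ℝ} {A A' B B' : ℝ}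
    (hf : HasSum f A) (hf' : HasSum (fun i : ℕ => (i : ℝ) * f i) A')
    (hg : HasSum g B) (hg' : HasSum (fun j : ℕ => (j : ℝ) * g j) B') :
    HasSum (fun k : ℕ => (k : ℝ) * ∑ p ∈ antidiagonal k, f p.1 * g p.2) (A' * B + A * B') := by
  refine ((hasSum_sum_antidiagonal_mul hf' hg).add (hasSum_sum_antidiagonal_mul hf hg')).congr_fun
    fun k => ?_
  rw [← sum_add_distrib, mul_sum]
  refine sum_congr rfl fun p hp => ?_
  rw [← mem_antidiagonal.mp hp]
  push_cast
  ring

lemma pCoef_mul_pow_div_factorial (n : ℕ) (a t : ℝ) (k : ℕ) :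
    pCoef n a k * t ^ k / k.factorial =
      ∑ p ∈ antidiagonal k,
        risingFac n p.1 * t ^ p.1 / p.1.factorial * ((a * t) ^ p.2 / p.2.factorial) := by
  rw [pCoef, ← Nat.sum_antidiagonal_eq_sum_range_succ
    (fun i j => (k.choose i : ℝ) * risingFac n i * a ^ j) k, sum_mul, sum_div]
  refine sum_congr rfl fun p hp => ?_
  obtain rfl := mem_antidiagonal.mp hp
  rw [Nat.cast_add_choose, pow_add, mul_pow]
  field_simp

lemma W_eq_exp_mul_pCoef (n : ℕ) (a : ℝ) (k : ℕ) {x : ℝ} (hx : 1 + x ≠ 0) :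
    W n a k x = Real.exp (-(a * (x / (1 + x)))) / (1 + x) ^ n *
      (pCoef n a k * (x / (1 + x)) ^ k / k.factorial) := by
  rw [W, pow_add, div_pow]
  field_simp

lemma hasSum_natCast_mul_pCoef_mul_pow_div_factorial (n : ℕ) (a : ℝ) {t : ℝ} (ht : ‖t‖ < 1) :
    HasSum (fun k : ℕ => (k : ℝ) * (pCoef n a k * t ^ k / k.factorial))
      ((n * t * (1 - t)⁻¹ + a * t) * (1 - t)⁻¹ ^ n * Real.exp (a * t)) := by
  convert hasSum_natCast_mul_sum_antidiagonal_mul (hasSum_risingFac_mul_pow_div_factorial n ht)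
    (hasSum_natCast_mul_risingFac_mul_pow_div_factorial n ht)
    (Real.hasSum_pow_div_factorial (a * t)) (Real.hasSum_natCast_mul_pow_div_factorial (a * t))
    using 1
  · simp only [pCoef_mul_pow_div_factorial]
  · ring

theorem sum_k_W_general (a : ℝ) (n : ℕ) (x : ℝ) (hx : 0 ≤ x) :
    ∑' k : ℕ, (k : ℝ) * W n a k x = (n : ℝ) * x + a * x / (1 + x) := by
  have hx1 : 1 + x ≠ 0 := by positivity
  set t := x / (1 + x) with ht_def
  have ht : ‖t‖ < 1 := by
    rw [Real.norm_of_nonneg (by positivity)]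
    exact (div_lt_one (by positivity)).2 (by linarith)
  have h1t : (1 - t)⁻¹ = 1 + x := by
    rw [ht_def, one_sub_div hx1, add_sub_cancel_right, one_div, inv_inv]
  calc ∑' k : ℕ, (k : ℝ) * W n a k x
      = ∑' k : ℕ, Real.exp (-(a * t)) / (1 + x) ^ n *
          ((k : ℝ) * (pCoef n a k * t ^ k / k.factorial)) :=
        tsum_congr fun k => by rw [W_eq_exp_mul_pCoef n a k hx1]; ring
    _ = (n : ℝ) * x + a * x / (1 + x) := by
      rw [((hasSum_natCast_mul_pCoef_mul_pow_div_factorial n a ht).mul_left _).tsum_eq, h1t,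
        Real.exp_neg, ht_def]
      field_simp

theorem sum_k_W (a : ℝ) (ha : 0 ≤ a) (n : ℕ) (hn : 1 ≤ n) (x : ℝ) (hx : 0 ≤ x) :
    ∑' k : ℕ, (k : ℝ) * W n a k x = (n : ℝ) * x + a * x / (1 + x) :=
  sum_k_W_general a n x hx
end

section
/- For every real a ≥ 0, every integer n ≥ 1, all reals 0 ≤ α ≤ β and every x ≥ 0, the second moment of the generalized Baskakov–Kantorovich–Stancu operator is T_{n,a}^{α,β}(t²;x) = ((n²+n)/(n+β)²)·x² + (2n(1+α)/(n+β)²)·x + (a²/(n+β)²)·x²/(1+x)² + (2an/(n+β)²)·x²/(1+x) + (2a(1+α)/(n+β)²)·x/(1+x) + (3α²+3α+1)/(3(n+β)²). -/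
open MeasureTheory Filter

lemma risingFac_eq (n i : ℕ) : risingFac n i = (n.ascFactorial i : ℝ) := by
  induction i with
  | zero => simp [risingFac]
  | succ i ih =>
    rw [risingFac, Finset.prod_range_succ, ← risingFac, ih, Nat.ascFactorial_succ]
    push_cast; ring

lemma risingFac_nonneg (n i : ℕ) : 0 ≤ risingFac n i := by
  rw [risingFac_eq]; positivity

lemma risingFac_succ_left (m i : ℕ) :
    risingFac m (i + 1) = m * risingFac (m + 1) i := by
  rw [risingFac, Finset.prod_range_succ', risingFac, mul_comm]
  congr 1
  · push_cast; ring
  · refine Finset.prod_congr rfl fun j _ => by push_cast; ring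

lemma hasSum_rising (m : ℕ) (hm : 1 ≤ m) {t : ℝ} (ht0 : 0 ≤ t) (ht1 : t < 1) :
    HasSum (fun i : ℕ => risingFac m i * t ^ i / (Nat.factorial i : ℝ))
      (1 / (1 - t) ^ m) := by
  have hr : ‖t‖ < 1 := by rw [Real.norm_eq_abs, abs_of_nonneg ht0]; exact ht1
  have h := hasSum_choose_mul_geometric_of_norm_lt_one (𝕜 := ℝ) (m - 1) hr
  rw [Nat.sub_add_cancel hm] at h
  convert h using 2 with i
  · rfl
  have hsym : (i + (m - 1)).choose (m - 1) = (m + i - 1).choose i := by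
    have h2 := Nat.choose_symm (n := i + (m - 1)) (k := i) (Nat.le_add_right _ _)
    rw [show i + (m - 1) - i = m - 1 by omega] at h2
    rw [h2]; congr 1; omega
  have h1 : risingFac m i = (Nat.factorial i : ℝ) * ((i + (m - 1)).choose (m - 1) : ℝ) := by
    rw [risingFac_eq, Nat.ascFactorial_eq_factorial_mul_choose', hsym]
    push_cast; ring
  rw [h1]
  have : (Nat.factorial i : ℝ) ≠ 0 := Nat.cast_ne_zero.mpr i.factorial_ne_zero
  field_simp

lemma hasSum_shift1 {f : ℕ → ℝ} {S : ℝ} (h : HasSum (fun i => f (i + 1)) S)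
    (h0 : f 0 = 0) : HasSum f S := by
  have := (hasSum_nat_add_iff (f := f) 1).mp h
  simpa [h0] using this

lemma hasSum_rising_one (m : ℕ) (hm : 1 ≤ m) {t : ℝ} (ht0 : 0 ≤ t) (ht1 : t < 1) :
    HasSum (fun i : ℕ => (i : ℝ) * (risingFac m i * t ^ i / (Nat.factorial i : ℝ)))
      ((m : ℝ) * t * (1 / (1 - t) ^ (m + 1))) := by
  apply hasSum_shift1 _ (by simp)
  have h := (hasSum_rising (m + 1) (by omega) ht0 ht1).mul_left ((m : ℝ) * t)
  convert h using 1
  · rfl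
  funext i
  rw [risingFac_succ_left, Nat.factorial_succ]
  push_cast
  have h1 : (Nat.factorial i : ℝ) ≠ 0 := Nat.cast_ne_zero.mpr i.factorial_ne_zero
  have h2 : ((i : ℝ) + 1) ≠ 0 := by positivity
  field_simp
  try ring

lemma hasSum_rising_two (m : ℕ) (hm : 1 ≤ m) {t : ℝ} (ht0 : 0 ≤ t) (ht1 : t < 1) :
    HasSum (fun i : ℕ => (i : ℝ) * ((i : ℝ) - 1) * (risingFac m i * t ^ i / (Nat.factorial i : ℝ)))
      ((m : ℝ) * ((m : ℝ) + 1) * t ^ 2 * (1 / (1 - t) ^ (m + 2))) := by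
  apply hasSum_shift1 _ (by simp)
  have h := (hasSum_rising_one (m + 1) (by omega) ht0 ht1).mul_left ((m : ℝ) * t)
  convert h using 1
  · rfl
  · funext i
    rw [risingFac_succ_left, Nat.factorial_succ]
    push_cast
    have h1 : (Nat.factorial i : ℝ) ≠ 0 := Nat.cast_ne_zero.mpr i.factorial_ne_zero
    have h2 : ((i : ℝ) + 1) ≠ 0 := by positivity
    field_simp
    try ring
  · push_cast; ring

lemma hasSum_exp_pow {y : ℝ} :
    HasSum (fun j : ℕ => y ^ j / (Nat.factorial j : ℝ)) (Real.exp y) := by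
  rw [Real.exp_eq_exp_ℝ]
  exact NormedSpace.expSeries_div_hasSum_exp y

lemma hasSum_exp_one {y : ℝ} :
    HasSum (fun j : ℕ => (j : ℝ) * (y ^ j / (Nat.factorial j : ℝ))) (y * Real.exp y) := by
  apply hasSum_shift1 _ (by simp)
  have h := hasSum_exp_pow (y := y).mul_left y
  convert h using 1
  · rfl
  funext j
  rw [Nat.factorial_succ]
  push_cast
  have h1 : (Nat.factorial j : ℝ) ≠ 0 := Nat.cast_ne_zero.mpr j.factorial_ne_zero
  have h2 : ((j : ℝ) + 1) ≠ 0 := by positivity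
  field_simp
  try ring

lemma hasSum_exp_two {y : ℝ} :
    HasSum (fun j : ℕ => (j : ℝ) * ((j : ℝ) - 1) * (y ^ j / (Nat.factorial j : ℝ)))
      (y ^ 2 * Real.exp y) := by
  apply hasSum_shift1 _ (by simp)
  have h := (hasSum_exp_one (y := y)).mul_left y
  convert h using 1
  · rfl
  · funext j
    rw [Nat.factorial_succ]
    push_cast
    have h1 : (Nat.factorial j : ℝ) ≠ 0 := Nat.cast_ne_zero.mpr j.factorial_ne_zero
    have h2 : ((j : ℝ) + 1) ≠ 0 := by positivity
    field_simp
    try ring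
  · ring

lemma hasSum_cauchy {f g : ℕ → ℝ} {S T : ℝ} (hf0 : ∀ i, 0 ≤ f i) (hg0 : ∀ j, 0 ≤ g j)
    (Hf : HasSum f S) (Hg : HasSum g T) :
    HasSum (fun k => ∑ i ∈ Finset.range (k + 1), f i * g (k - i)) (S * T) := by
  have hf : Summable fun i => ‖f i‖ := by
    simpa [Real.norm_eq_abs, abs_of_nonneg (hf0 _)] using Hf.summable
  have hg : Summable fun j => ‖g j‖ := by
    simpa [Real.norm_eq_abs, abs_of_nonneg (hg0 _)] using Hg.summable
  have h := hasSum_sum_range_mul_of_summable_norm hf hg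
  rwa [Hf.tsum_eq, Hg.tsum_eq] at h

lemma pCoef_conv (n : ℕ) (a t : ℝ) (k : ℕ) :
    pCoef n a k * t ^ k / (Nat.factorial k : ℝ) =
      ∑ i ∈ Finset.range (k + 1),
        (risingFac n i * t ^ i / (Nat.factorial i : ℝ)) *
          ((a * t) ^ (k - i) / (Nat.factorial (k - i) : ℝ)) := by
  rw [pCoef, Finset.sum_mul, Finset.sum_div]
  apply Finset.sum_congr rfl
  intro i hi
  rw [Finset.mem_range] at hi
  obtain ⟨j, rfl⟩ : ∃ j, k = i + j := ⟨k - i, by omega⟩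
  rw [Nat.add_sub_cancel_left, Nat.cast_choose ℝ (Nat.le_add_right i j), mul_pow, pow_add]
  have h1 : (Nat.factorial i : ℝ) ≠ 0 := Nat.cast_ne_zero.mpr i.factorial_ne_zero
  have h2 : (Nat.factorial j : ℝ) ≠ 0 := Nat.cast_ne_zero.mpr j.factorial_ne_zero
  have h3 : (Nat.factorial (i + j) : ℝ) ≠ 0 := Nat.cast_ne_zero.mpr (i + j).factorial_ne_zero
  field_simp
  rw [Nat.add_sub_cancel_left]
  ring

lemma cast_mul_sub_one_nonneg (i : ℕ) : 0 ≤ (i : ℝ) * ((i : ℝ) - 1) := by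
  rcases i with _ | i
  · simp
  · push_cast
    have : (0:ℝ) ≤ (i:ℝ) := by positivity
    nlinarith

lemma hasSum_main (n : ℕ) (hn : 1 ≤ n) (a : ℝ) (ha : 0 ≤ a) {t : ℝ}
    (ht0 : 0 ≤ t) (ht1 : t < 1) (c d : ℝ) :
    HasSum (fun k : ℕ => pCoef n a k * t ^ k / (Nat.factorial k : ℝ) *
        ((k : ℝ) ^ 2 + c * (k : ℝ) + d))
      ((n : ℝ) * ((n : ℝ) + 1) * t ^ 2 * (1 / (1 - t) ^ (n + 2)) * Real.exp (a * t) +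
        (1 / (1 - t) ^ n) * ((a * t) ^ 2 * Real.exp (a * t)) +
        2 * ((n : ℝ) * t * (1 / (1 - t) ^ (n + 1)) * (a * t * Real.exp (a * t))) +
        (c + 1) * ((n : ℝ) * t * (1 / (1 - t) ^ (n + 1)) * Real.exp (a * t)) +
        (c + 1) * ((1 / (1 - t) ^ n) * (a * t * Real.exp (a * t))) +
        d * ((1 / (1 - t) ^ n) * Real.exp (a * t))) := by
  set A : ℕ → ℝ := fun i => risingFac n i * t ^ i / (Nat.factorial i : ℝ) with hA
  set B : ℕ → ℝ := fun j => (a * t) ^ j / (Nat.factorial j : ℝ) with hB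
  have hy0 : 0 ≤ a * t := mul_nonneg ha ht0
  have hA0 : ∀ i : ℕ, 0 ≤ A i := fun i => by
    simp only [hA]
    exact div_nonneg (mul_nonneg (risingFac_nonneg n i) (pow_nonneg ht0 i)) (by positivity)
  have hB0 : ∀ j : ℕ, 0 ≤ B j := fun j => by
    simp only [hB]
    exact div_nonneg (pow_nonneg hy0 j) (by positivity)
  have hA10 : ∀ i : ℕ, 0 ≤ (i : ℝ) * A i := fun i => mul_nonneg (by positivity) (hA0 i)
  have hA20 : ∀ i : ℕ, 0 ≤ (i : ℝ) * ((i : ℝ) - 1) * A i :=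
    fun i => mul_nonneg (cast_mul_sub_one_nonneg i) (hA0 i)
  have hB10 : ∀ j : ℕ, 0 ≤ (j : ℝ) * B j := fun j => mul_nonneg (by positivity) (hB0 j)
  have hB20 : ∀ j : ℕ, 0 ≤ (j : ℝ) * ((j : ℝ) - 1) * B j :=
    fun j => mul_nonneg (cast_mul_sub_one_nonneg j) (hB0 j)
  have HA : HasSum A (1 / (1 - t) ^ n) := hasSum_rising n hn ht0 ht1
  have HA1 : HasSum (fun i : ℕ => (i : ℝ) * A i) ((n : ℝ) * t * (1 / (1 - t) ^ (n + 1))) :=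
    hasSum_rising_one n hn ht0 ht1
  have HA2 : HasSum (fun i : ℕ => (i : ℝ) * ((i : ℝ) - 1) * A i)
      ((n : ℝ) * ((n : ℝ) + 1) * t ^ 2 * (1 / (1 - t) ^ (n + 2))) := by
    have := hasSum_rising_two n hn ht0 ht1
    simpa [mul_assoc] using this
  have HB : HasSum B (Real.exp (a * t)) := hasSum_exp_pow
  have HB1 : HasSum (fun j : ℕ => (j : ℝ) * B j) (a * t * Real.exp (a * t)) := hasSum_exp_one
  have HB2 : HasSum (fun j : ℕ => (j : ℝ) * ((j : ℝ) - 1) * B j)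
      ((a * t) ^ 2 * Real.exp (a * t)) := hasSum_exp_two
  have C1 := hasSum_cauchy hA20 hB0 HA2 HB
  have C2 := hasSum_cauchy hA0 hB20 HA HB2
  have C3 := (hasSum_cauchy hA10 hB10 HA1 HB1).mul_left 2
  have C4 := (hasSum_cauchy hA10 hB0 HA1 HB).mul_left (c + 1)
  have C5 := (hasSum_cauchy hA0 hB10 HA HB1).mul_left (c + 1)
  have C6 := (hasSum_cauchy hA0 hB0 HA HB).mul_left d
  have H := ((((C1.add C2).add C3).add C4).add C5).add C6
  convert H using 1
  funext k
  simp only [hA, hB]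
  rw [pCoef_conv]
  refine Eq.symm ?_
  simp only [Finset.mul_sum]
  rw [← Finset.sum_add_distrib, ← Finset.sum_add_distrib, ← Finset.sum_add_distrib,
    ← Finset.sum_add_distrib, ← Finset.sum_add_distrib, Finset.sum_mul]
  apply Finset.sum_congr rfl
  intro i hi
  rw [Finset.mem_range] at hi
  have hIJ : (i : ℝ) + ((k - i : ℕ) : ℝ) = (k : ℝ) := by
    have h9 : i + (k - i) = k := by omega
    exact_mod_cast congrArg (Nat.cast : ℕ → ℝ) h9
  linear_combination (risingFac n i * t ^ i / (Nat.factorial i : ℝ)) *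
    ((a * t) ^ (k - i) / (Nat.factorial (k - i) : ℝ)) *
    ((i : ℝ) + ((k - i : ℕ) : ℝ) + (k : ℝ) + c) * hIJ

open intervalIntegral in
lemma integral_sq (u v : ℝ) : ∫ s in u..v, s ^ 2 = (v ^ 3 - u ^ 3) / 3 := by
  rw [integral_pow]; norm_num

theorem Top_second_moment (a : ℝ) (ha : 0 ≤ a) (n : ℕ) (hn : 1 ≤ n) (α β : ℝ)
    (hα : 0 ≤ α) (hαβ : α ≤ β) (x : ℝ) (hx : 0 ≤ x) :
    TKS n a α β (fun t => t ^ 2) x =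
      (((n : ℝ) ^ 2 + n) / ((n : ℝ) + β) ^ 2) * x ^ 2 +
        (2 * (n : ℝ) * (1 + α) / ((n : ℝ) + β) ^ 2) * x +
        (a ^ 2 / ((n : ℝ) + β) ^ 2) * (x ^ 2 / (1 + x) ^ 2) +
        (2 * a * n / ((n : ℝ) + β) ^ 2) * (x ^ 2 / (1 + x)) +
        (2 * a * (1 + α) / ((n : ℝ) + β) ^ 2) * (x / (1 + x)) +
        (3 * α ^ 2 + 3 * α + 1) / (3 * ((n : ℝ) + β) ^ 2) := by
  have hx1 : (0:ℝ) < 1 + x := by linarith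
  have hnb : (0:ℝ) < (n : ℝ) + β := by
    have h1 : (1:ℝ) ≤ (n : ℝ) := by exact_mod_cast hn
    have h2 : (0:ℝ) ≤ β := hα.trans hαβ
    linarith
  set t : ℝ := x / (1 + x) with htdef
  have ht0 : 0 ≤ t := div_nonneg hx hx1.le
  have ht1 : t < 1 := by rw [htdef, div_lt_one hx1]; linarith
  have Hmain := hasSum_main n hn a ha ht0 ht1 (2 * α + 1) (α ^ 2 + α + 1 / 3)
  have Hsummand : HasSum
      (fun k : ℕ => W n a k x *
        ∫ s in (((k : ℝ) + α) / ((n : ℝ) + β))..(((k : ℝ) + α + 1) / ((n : ℝ) + β)), s ^ 2)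
      (((n : ℝ) * ((n : ℝ) + 1) * t ^ 2 * (1 / (1 - t) ^ (n + 2)) * Real.exp (a * t) +
        (1 / (1 - t) ^ n) * ((a * t) ^ 2 * Real.exp (a * t)) +
        2 * ((n : ℝ) * t * (1 / (1 - t) ^ (n + 1)) * (a * t * Real.exp (a * t))) +
        (2 * α + 1 + 1) * ((n : ℝ) * t * (1 / (1 - t) ^ (n + 1)) * Real.exp (a * t)) +
        (2 * α + 1 + 1) * ((1 / (1 - t) ^ n) * (a * t * Real.exp (a * t))) +
        (α ^ 2 + α + 1 / 3) * ((1 / (1 - t) ^ n) * Real.exp (a * t))) *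
        (Real.exp (-(a * t)) / ((1 + x) ^ n * ((n : ℝ) + β) ^ 3))) := by
    convert Hmain.mul_right (Real.exp (-(a * t)) / ((1 + x) ^ n * ((n : ℝ) + β) ^ 3)) using 1
    · rfl
    funext k
    rw [integral_sq, W]
    have hexp : -(a * x) / (1 + x) = -(a * t) := by rw [htdef]; ring
    have htk : t ^ k = x ^ k / (1 + x) ^ k := by rw [htdef, div_pow]
    have hpow : (1 + x) ^ (k + n) = (1 + x) ^ k * (1 + x) ^ n := pow_add _ k n
    have hfk : (Nat.factorial k : ℝ) ≠ 0 := Nat.cast_ne_zero.mpr k.factorial_ne_zero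
    have hxk : ((1 : ℝ) + x) ^ k ≠ 0 := pow_ne_zero _ hx1.ne'
    have hxn : ((1 : ℝ) + x) ^ n ≠ 0 := pow_ne_zero _ hx1.ne'
    rw [hexp, hpow, htk]
    field_simp
    ring
  rw [TKS, Hsummand.tsum_eq]
  have h1t : 1 - t = (1 + x)⁻¹ := by rw [htdef]; field_simp; ring
  rw [h1t, Real.exp_neg, htdef]
  have hE : Real.exp (a * (x / (1 + x))) ≠ 0 := Real.exp_ne_zero _
  have hxn : ((1 : ℝ) + x) ^ n ≠ 0 := pow_ne_zero _ hx1.ne'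
  simp only [inv_pow, one_div, inv_inv, pow_add]
  field_simp
  ring
end

section
/- Fix reals a ≥ 0 and 0 ≤ α ≤ β, a real 0 < r ≤ 1 and a constant M > 0. Suppose f : [0,∞) → ℝ is continuous and satisfies |f(t) − f(x)| ≤ M·|t−x|^r/(t+x)^{r/2} for all t, x ∈ (0,∞). Then for every integer n ≥ 1 and every x > 0: |T_{n,a}^{α,β}(f;x) − f(x)| ≤ M·(Λ_n(x)/x)^{r/2}, where Λ_n(x) = T_{n,a}^{α,β}((t−x)²;x). -/
open MeasureTheory Filter

/-!
The basis `W_{n,k}^a(x)` is a probability sequence in `k`, and `(n+β) ∫_{I_k}` is the average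
over `I_k = [(k+α)/(n+β), (k+α+1)/(n+β)]`. Hence `T(f;x) - f(x)` is the `W`-weighted mean
of `⨍_{I_k} f - f(x)`. For `t > 0` the hypothesis gives `|f t - f x| ≤ M x^{-r/2} |t - x|^r`, and
Jensen's inequality for the concave `u ↦ u^{r/2}`, applied once to each interval average and once
to the weighted sum, bounds the resulting mean of `|t - x|^r` by `T((t-x)²; x)^{r/2}`.
-/

open scoped Nat Topology

lemma risingFac_succ_eq_factorial_mul_choose (m i : ℕ) :
    risingFac (m + 1) i = (i ! * (i + m).choose m : ℕ) := by
  rw [risingFac, ← Nat.choose_symm_add, add_comm i m, ← Nat.ascFactorial_eq_factorial_mul_choose,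
    Nat.ascFactorial_eq_prod_range]
  push_cast
  rfl

lemma pCoef_nonneg (n : ℕ) {a : ℝ} (ha : 0 ≤ a) (k : ℕ) : 0 ≤ pCoef n a k :=
  Finset.sum_nonneg fun i _ => by
    have : 0 ≤ risingFac n i := Finset.prod_nonneg fun j _ => by positivity
    positivity

lemma pCoef_div_factorial (m : ℕ) (a : ℝ) (k : ℕ) :
    pCoef (m + 1) a k / k ! =
      ∑ i ∈ Finset.range (k + 1), ((i + m).choose m : ℝ) * (a ^ (k - i) / (k - i)!) := by
  rw [pCoef, Finset.sum_div]
  refine Finset.sum_congr rfl fun i hi => ?_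
  have hik : i ≤ k := Nat.lt_succ_iff.mp (Finset.mem_range.mp hi)
  have hchoose : (k.choose i : ℝ) * i ! * (k - i)! = k ! := by
    exact_mod_cast Nat.choose_mul_factorial_mul_factorial hik
  have : (k.choose i : ℝ) ≠ 0 := by exact_mod_cast (Nat.choose_pos hik).ne'
  rw [risingFac_succ_eq_factorial_mul_choose, ← hchoose]
  push_cast
  field_simp

/-- A Cauchy product of `∑ (i+m choose m) yⁱ = (1-y)^{-(m+1)}` with the exponential series. -/
lemma hasSum_pCoef_div_factorial_mul_pow (m : ℕ) (a : ℝ) {y : ℝ} (hy : ‖y‖ < 1) :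
    HasSum (fun k => pCoef (m + 1) a k / k ! * y ^ k) (Real.exp (a * y) / (1 - y) ^ (m + 1)) := by
  have hgeom := hasSum_choose_mul_geometric_of_norm_lt_one m hy
  have hexp : HasSum (fun j => (a * y) ^ j / j !) (Real.exp (a * y)) := by
    rw [Real.exp_eq_exp_ℝ]
    exact NormedSpace.expSeries_div_hasSum_exp (a * y)
  have hgeom_norm : Summable fun i => ‖((i + m).choose m : ℝ) * y ^ i‖ := by
    simpa using summable_choose_mul_geometric_of_norm_lt_one m (r := ‖y‖) (by simpa using hy)
  have hexp_norm : Summable fun j => ‖(a * y) ^ j / (j ! : ℝ)‖ := by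
    simpa using Real.summable_pow_div_factorial ‖a * y‖
  have hprod := hasSum_sum_range_mul_of_summable_norm hgeom_norm hexp_norm
  rw [hgeom.tsum_eq, hexp.tsum_eq] at hprod
  have hterm : (fun k => pCoef (m + 1) a k / k ! * y ^ k) = fun k =>
      ∑ i ∈ Finset.range (k + 1), (i + m).choose m * y ^ i * ((a * y) ^ (k - i) / (k - i)!) := by
    funext k
    rw [pCoef_div_factorial, Finset.sum_mul]
    refine Finset.sum_congr rfl fun i hi => ?_
    have hik : i ≤ k := Nat.lt_succ_iff.mp (Finset.mem_range.mp hi)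
    rw [mul_pow, ← Nat.add_sub_cancel' hik, pow_add, Nat.add_sub_cancel_left]
    ring
  rwa [hterm, div_eq_inv_mul, ← one_div]

lemma W_eq_mul_pow (n : ℕ) (a : ℝ) {x : ℝ} (hx : 0 ≤ x) (k : ℕ) :
    W n a k x = Real.exp (-(a * x) / (1 + x)) / (1 + x) ^ n *
      (pCoef n a k / k ! * (x / (1 + x)) ^ k) := by
  have : 0 < 1 + x := by linarith
  rw [W, div_pow, pow_add]
  field_simp

lemma W_nonneg (n : ℕ) {a x : ℝ} (ha : 0 ≤ a) (hx : 0 ≤ x) (k : ℕ) : 0 ≤ W n a k x := by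
  have := pCoef_nonneg n ha k
  unfold W
  positivity

lemma norm_div_one_add_lt_one {x : ℝ} (hx : 0 ≤ x) : ‖x / (1 + x)‖ < 1 := by
  rw [Real.norm_of_nonneg (by positivity), div_lt_one (by linarith)]
  linarith

lemma hasSum_W {n : ℕ} (hn : 0 < n) (a : ℝ) {x : ℝ} (hx : 0 ≤ x) :
    HasSum (fun k => W n a k x) 1 := by
  obtain ⟨m, rfl⟩ : ∃ m, n = m + 1 := ⟨n - 1, by omega⟩
  have h1x : 0 < 1 + x := by linarith
  have hsum := (hasSum_pCoef_div_factorial_mul_pow m a (norm_div_one_add_lt_one hx)).mul_left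
    (Real.exp (-(a * x) / (1 + x)) / (1 + x) ^ (m + 1))
  rw [← funext (W_eq_mul_pow (m + 1) a hx)] at hsum
  have hval : Real.exp (-(a * x) / (1 + x)) / (1 + x) ^ (m + 1) *
      (Real.exp (a * (x / (1 + x))) / (1 - x / (1 + x)) ^ (m + 1)) = 1 := by
    have h1y : 1 - x / (1 + x) = (1 + x)⁻¹ := by field_simp; ring
    rw [h1y, inv_pow, div_inv_eq_mul]
    field_simp
    rw [← Real.exp_add, neg_add_cancel, Real.exp_zero]
  rwa [hval] at hsum

lemma tendsto_add_sq_mul_pow_of_abs_lt_one (γ : ℝ) {ρ : ℝ} (hρ : |ρ| < 1) :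
    Tendsto (fun k : ℕ => ((k : ℝ) + γ) ^ 2 * ρ ^ k) atTop (𝓝 0) := by
  have h := ((tendsto_pow_const_mul_const_pow_of_abs_lt_one 2 hρ).add
    ((tendsto_pow_const_mul_const_pow_of_abs_lt_one 1 hρ).const_mul (2 * γ))).add
    ((tendsto_pow_atTop_nhds_zero_of_abs_lt_one hρ).const_mul (γ ^ 2))
  simp only [mul_zero, add_zero] at h
  refine h.congr fun k => ?_
  ring

/-- The coefficient series of `W` converges on the whole unit disc, while `x / (1 + x)` lies
strictly inside it: the gap absorbs the polynomial factor. -/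
lemma summable_W_mul_sq {n : ℕ} (hn : 0 < n) {a x : ℝ} (ha : 0 ≤ a) (hx : 0 ≤ x) (γ : ℝ) :
    Summable fun k : ℕ => W n a k x * ((k : ℝ) + γ) ^ 2 := by
  obtain ⟨m, rfl⟩ : ∃ m, n = m + 1 := ⟨n - 1, by omega⟩
  set y := x / (1 + x)
  have hy : ‖y‖ < 1 := norm_div_one_add_lt_one hx
  have hy0 : 0 ≤ y := by positivity
  rw [Real.norm_of_nonneg hy0] at hy
  obtain ⟨z, hyz, hz1⟩ := exists_between hy
  have hz0 : 0 < z := hy0.trans_lt hyz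
  have hz : ‖z‖ < 1 := by rwa [Real.norm_of_nonneg hz0.le]
  have hρ : |y / z| < 1 := by rwa [abs_of_nonneg (by positivity), div_lt_one hz0]
  obtain ⟨B, hB⟩ := (tendsto_add_sq_mul_pow_of_abs_lt_one γ hρ).bddAbove_range
  set E := Real.exp (-(a * x) / (1 + x)) / (1 + x) ^ (m + 1)
  have hE : 0 ≤ E := by positivity
  refine Summable.of_nonneg_of_le (fun k => mul_nonneg (W_nonneg _ ha hx k) (sq_nonneg _))
    (fun k => ?_) ((hasSum_pCoef_div_factorial_mul_pow m a hz).summable.mul_left (E * B))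
  have hc : 0 ≤ pCoef (m + 1) a k / k ! * z ^ k := by
    have := pCoef_nonneg (m + 1) ha k
    positivity
  calc W (m + 1) a k x * ((k : ℝ) + γ) ^ 2
      = E * (pCoef (m + 1) a k / k ! * z ^ k) * (((k : ℝ) + γ) ^ 2 * (y / z) ^ k) := by
        have hyk : y ^ k = z ^ k * (y / z) ^ k := by rw [← mul_pow, mul_div_cancel₀ _ hz0.ne']
        rw [W_eq_mul_pow _ a hx, hyk]
        ring
    _ ≤ E * (pCoef (m + 1) a k / k ! * z ^ k) * B :=
        mul_le_mul_of_nonneg_left (hB ⟨k, rfl⟩) (mul_nonneg hE hc)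
    _ = E * B * (pCoef (m + 1) a k / k ! * z ^ k) := by ring

lemma TKS_eq_tsum_mul_intervalAverage (n : ℕ) (a α β : ℝ) (f : ℝ → ℝ) (x : ℝ) :
    TKS n a α β f x = ∑' k : ℕ,
      W n a k x * ⨍ t in (k + α) / (n + β)..(k + α + 1) / (n + β), f t := by
  rw [TKS, ← tsum_mul_left]
  refine tsum_congr fun k => ?_
  rw [interval_average_eq, smul_eq_mul, ← sub_div, add_sub_cancel_left, inv_div, div_one]
  ring

lemma intervalAverage_nonneg {g : ℝ → ℝ} (hg : ∀ t, 0 ≤ g t) (c d : ℝ) :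
    0 ≤ ⨍ t in c..d, g t := by
  rw [average_eq]
  exact smul_nonneg (by positivity) (integral_nonneg hg)

lemma intervalAverage_le_of_forall_le {g : ℝ → ℝ} {c d B : ℝ} (hcd : c ≠ d)
    (hg : IntervalIntegrable g volume c d) (hB : ∀ t ∈ Set.uIoc c d, g t ≤ B) :
    ⨍ t in c..d, g t ≤ B := by
  obtain ⟨t, ht, hle⟩ := exists_setAverage_le
    (by simpa [Real.volume_uIoc, sub_eq_zero] using hcd.symm) (by simp [Real.volume_uIoc])
    ((intervalIntegrable_iff (μ := volume)).1 hg)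
  exact hle.trans (hB t ht)

lemma intervalAverage_rpow_le {g : ℝ → ℝ} (hg : Continuous g) (hg0 : ∀ t, 0 ≤ g t) {c d θ : ℝ}
    (hcd : c ≠ d) (hθ0 : 0 ≤ θ) (hθ1 : θ ≤ 1) :
    ⨍ t in c..d, g t ^ θ ≤ (⨍ t in c..d, g t) ^ θ := by
  have hvol : volume (Set.uIoc c d) ≠ 0 := by
    simpa [Real.volume_uIoc, sub_eq_zero] using hcd.symm
  exact (Real.concaveOn_rpow hθ0 hθ1).le_map_set_average
    (Real.continuous_rpow_const hθ0).continuousOn isClosed_Ici hvol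
    (by simp [Real.volume_uIoc]) (ae_of_all _ hg0) hg.integrableOn_uIoc
    (hg.rpow_const fun _ => Or.inr hθ0).integrableOn_uIoc

lemma abs_intervalAverage_sub_le {f : ℝ → ℝ} {c d x r C : ℝ} (hcd : c < d)
    (hf : IntervalIntegrable f volume c d) (hr0 : 0 ≤ r) (hr2 : r ≤ 2) (hC : 0 ≤ C)
    (hlip : ∀ t ∈ Set.Ioo c d, |f t - f x| ≤ C * |t - x| ^ r) :
    |(⨍ t in c..d, f t) - f x| ≤ C * (⨍ t in c..d, (t - x) ^ 2) ^ (r / 2) := by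
  have hlen : 0 < d - c := sub_pos.2 hcd
  have hpow : ∀ t, ((t - x) ^ 2) ^ (r / 2) = |t - x| ^ r := fun t => by
    rw [← sq_abs, ← Real.rpow_natCast, ← Real.rpow_mul (abs_nonneg _)]
    congr 1
    push_cast
    ring
  have hjensen := intervalAverage_rpow_le (g := fun t => (t - x) ^ 2) (θ := r / 2) (by fun_prop)
    (fun t => sq_nonneg _) hcd.ne (by positivity) (by linarith)
  simp only [hpow] at hjensen
  have hcont : Continuous fun t => C * |t - x| ^ r := by
    have := Real.continuous_rpow_const hr0
    fun_prop
  have hcenter : (⨍ t in c..d, f t) - f x = (d - c)⁻¹ * ∫ t in c..d, (f t - f x) := by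
    rw [interval_average_eq, intervalIntegral.integral_sub hf intervalIntegrable_const,
      intervalIntegral.integral_const, smul_eq_mul, smul_eq_mul]
    field_simp
  calc |(⨍ t in c..d, f t) - f x| = (d - c)⁻¹ * |∫ t in c..d, (f t - f x)| := by
        rw [hcenter, abs_mul, abs_of_pos (inv_pos.2 hlen)]
    _ ≤ (d - c)⁻¹ * ∫ t in c..d, C * |t - x| ^ r := by
        refine mul_le_mul_of_nonneg_left ?_ (inv_pos.2 hlen).le
        exact (intervalIntegral.abs_integral_le_integral_abs hcd.le).trans
          (intervalIntegral.integral_mono_on_of_le_Ioo hcd.le (hf.sub intervalIntegrable_const).abs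
            (hcont.intervalIntegrable _ _) hlip)
    _ = C * ⨍ t in c..d, |t - x| ^ r := by
        rw [interval_average_eq, intervalIntegral.integral_const_mul, smul_eq_mul]
        ring
    _ ≤ C * (⨍ t in c..d, (t - x) ^ 2) ^ (r / 2) := mul_le_mul_of_nonneg_left hjensen hC

/-- Jensen's inequality for `u ↦ u ^ θ` against a probability sequence `w`: Hölder's inequality
with exponents `1 / (1 - θ)` and `1 / θ`, applied to `w ^ (1 - θ)` and `(w * u) ^ θ`. -/
lemma summable_and_tsum_mul_rpow_le {w u : ℕ → ℝ} (hw0 : ∀ k, 0 ≤ w k) (hw : HasSum w 1)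
    (hu0 : ∀ k, 0 ≤ u k) (hwu : Summable fun k => w k * u k) {θ : ℝ} (hθ0 : 0 < θ) (hθ1 : θ < 1) :
    (Summable fun k => w k * u k ^ θ) ∧ ∑' k, w k * u k ^ θ ≤ (∑' k, w k * u k) ^ θ := by
  have hpq := Real.HolderConjugate.inv_inv (sub_pos.2 hθ1) hθ0 (sub_add_cancel 1 θ)
  have hwp : ∀ k, (w k ^ (1 - θ)) ^ (1 - θ)⁻¹ = w k := fun k => by
    rw [← Real.rpow_mul (hw0 k), mul_inv_cancel₀ (sub_pos.2 hθ1).ne', Real.rpow_one]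
  have hwuq : ∀ k, ((w k * u k) ^ θ) ^ θ⁻¹ = w k * u k := fun k => by
    rw [← Real.rpow_mul (mul_nonneg (hw0 k) (hu0 k)), mul_inv_cancel₀ hθ0.ne', Real.rpow_one]
  have hprod : ∀ k, w k ^ (1 - θ) * (w k * u k) ^ θ = w k * u k ^ θ := fun k => by
    rw [Real.mul_rpow (hw0 k) (hu0 k), ← mul_assoc, ← Real.rpow_add' (hw0 k) (by simp),
      sub_add_cancel, Real.rpow_one]
  have holder := Real.summable_and_inner_le_Lp_mul_Lq_tsum_of_nonneg hpq
    (f := fun k => w k ^ (1 - θ)) (g := fun k => (w k * u k) ^ θ)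
    (fun k => Real.rpow_nonneg (hw0 k) _) (fun k => Real.rpow_nonneg (mul_nonneg (hw0 k) (hu0 k)) _)
    (by simpa only [hwp] using hw.summable) (by simpa only [hwuq] using hwu)
  simp only [hprod, hwp, hwuq, hw.tsum_eq, one_div, inv_inv, Real.one_rpow, one_mul] at holder
  exact holder

lemma abs_tsum_mul_sub_le {w F G : ℕ → ℝ} {y C θ : ℝ} (hw0 : ∀ k, 0 ≤ w k) (hw : HasSum w 1)
    (hG0 : ∀ k, 0 ≤ G k) (hwG : Summable fun k => w k * G k) (hθ0 : 0 < θ) (hθ1 : θ < 1)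
    (hC : 0 ≤ C) (hF : ∀ k, |F k - y| ≤ C * G k ^ θ) :
    |∑' k, w k * F k - y| ≤ C * (∑' k, w k * G k) ^ θ := by
  obtain ⟨hwGθ, hjensen⟩ := summable_and_tsum_mul_rpow_le hw0 hw hG0 hwG hθ0 hθ1
  have hbound : ∀ k, |w k * (F k - y)| ≤ C * (w k * G k ^ θ) := fun k => by
    rw [abs_mul, abs_of_nonneg (hw0 k), mul_left_comm]
    exact mul_le_mul_of_nonneg_left (hF k) (hw0 k)
  have hdev : Summable fun k => w k * (F k - y) := (hwGθ.mul_left C).of_norm_bounded hbound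
  have hcenter : ∑' k, w k * F k - y = ∑' k, w k * (F k - y) := by
    rw [show (fun k => w k * F k) = fun k => w k * (F k - y) + w k * y by ext; ring,
      hdev.tsum_add (hw.summable.mul_right y), tsum_mul_right, hw.tsum_eq, one_mul,
      add_sub_cancel_right]
  calc |∑' k, w k * F k - y| = |∑' k, w k * (F k - y)| := by rw [hcenter]
    _ ≤ ∑' k, |w k * (F k - y)| := by
        simpa only [Real.norm_eq_abs] using norm_tsum_le_tsum_norm (f := fun k => w k * (F k - y))
          (by simpa only [Real.norm_eq_abs] using hdev.abs)
    _ ≤ ∑' k, C * (w k * G k ^ θ) := hdev.abs.tsum_le_tsum hbound (hwGθ.mul_left C)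
    _ = C * ∑' k, w k * G k ^ θ := tsum_mul_left
    _ ≤ C * (∑' k, w k * G k) ^ θ := by gcongr

lemma summable_W_mul_intervalAverage_sq {n : ℕ} (hn : 0 < n) {a α N x : ℝ} (ha : 0 ≤ a)
    (hα : 0 ≤ α) (hN : 1 ≤ N) (hx : 0 ≤ x) :
    Summable fun k : ℕ => W n a k x * ⨍ t in (k + α) / N..(k + α + 1) / N, (t - x) ^ 2 := by
  refine Summable.of_nonneg_of_le
    (fun k => mul_nonneg (W_nonneg n ha hx k) (intervalAverage_nonneg (fun t => sq_nonneg _) _ _))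
    (fun k => mul_le_mul_of_nonneg_left ?_ (W_nonneg n ha hx k))
    (summable_W_mul_sq hn ha hx (α + 1 + x))
  have hlt : ((k : ℝ) + α) / N < (k + α + 1) / N :=
    (div_lt_div_iff_of_pos_right (by linarith)).2 (by linarith)
  refine intervalAverage_le_of_forall_le hlt.ne
    ((by fun_prop : Continuous fun t : ℝ => (t - x) ^ 2).intervalIntegrable _ _) fun t ht => ?_
  rw [Set.uIoc_of_le hlt.le] at ht
  have ht0 : 0 < t := lt_of_le_of_lt (by positivity) ht.1
  have ht1 : t ≤ k + α + 1 := ht.2.trans (div_le_self (by positivity) hN)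
  exact sq_le_sq' (by linarith) (by linarith)

theorem Top_lipschitz_estimate (a : ℝ) (ha : 0 ≤ a) (α β : ℝ) (hα : 0 ≤ α) (hαβ : α ≤ β)
    (r : ℝ) (hr0 : 0 < r) (hr1 : r ≤ 1) (M : ℝ) (hM : 0 < M) (f : ℝ → ℝ)
    (hf : ContinuousOn f (Set.Ici 0))
    (hlip : ∀ t x : ℝ, 0 < t → 0 < x →
      |f t - f x| ≤ M * |t - x| ^ r / (t + x) ^ (r / 2)) :
    ∀ n : ℕ, 1 ≤ n → ∀ x : ℝ, 0 < x →
      |TKS n a α β f x - f x| ≤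
        M * (TKS n a α β (fun t => (t - x) ^ 2) x / x) ^ (r / 2) := by
  intro n hn x hx
  have hN : 1 ≤ (n : ℝ) + β := by
    have : (1 : ℝ) ≤ n := by exact_mod_cast hn
    linarith
  have hnode (k : ℕ) : 0 ≤ ((k : ℝ) + α) / (n + β) ∧
      ((k : ℝ) + α) / (n + β) < (k + α + 1) / (n + β) :=
    ⟨by positivity, (div_lt_div_iff_of_pos_right (by linarith)).2 (by linarith)⟩
  have hf_int (k : ℕ) :
      IntervalIntegrable f volume ((k + α) / (n + β)) ((k + α + 1) / (n + β)) :=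
    ContinuousOn.intervalIntegrable_of_Icc (hnode k).2.le
      (hf.mono (Set.Icc_subset_Ici_self.trans (Set.Ici_subset_Ici.2 (hnode k).1)))
  have hC : 0 ≤ M / x ^ (r / 2) := by positivity
  have hlip_x (t : ℝ) (ht : 0 < t) : |f t - f x| ≤ M / x ^ (r / 2) * |t - x| ^ r := by
    refine (hlip t x ht hx).trans ?_
    rw [div_mul_eq_mul_div]
    gcongr
    linarith
  have hmoment_nonneg (k : ℕ) :=
    intervalAverage_nonneg (fun t => sq_nonneg (t - x)) ((k + α) / (n + β)) ((k + α + 1) / (n + β))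
  have hmean := abs_tsum_mul_sub_le (W_nonneg n ha hx.le) (hasSum_W hn a hx.le) hmoment_nonneg
    (summable_W_mul_intervalAverage_sq hn ha hα hN hx.le) (by linarith : 0 < r / 2)
    (by linarith : r / 2 < 1) hC fun k => abs_intervalAverage_sub_le (hnode k).2 (hf_int k)
      hr0.le (by linarith) hC fun t ht => hlip_x t ((hnode k).1.trans_lt ht.1)
  rw [TKS_eq_tsum_mul_intervalAverage, TKS_eq_tsum_mul_intervalAverage, Real.div_rpow
    (tsum_nonneg fun k => mul_nonneg (W_nonneg n ha hx.le k) (hmoment_nonneg k)) hx.le]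
  exact hmean.trans_eq (by ring)
end

section
/- Let f : [0,∞) → ℝ be continuous with |f(x)| ≤ M_f·(1+x²) for some constant M_f and such that lim_{x→∞} f(x)/(1+x²) exists and is finite. Then lim_{δ→0⁺} Ω(f;δ) = 0. -/
open Filter

/-- First modulus of continuity on `[0,∞)`. -/
noncomputable def omega1 (f : ℝ → ℝ) (δ : ℝ) : ℝ :=
  sSup {y | ∃ h x : ℝ, 0 < h ∧ h ≤ δ ∧ 0 ≤ x ∧ y = |f (x + h) - f x|}

/-- Second modulus of continuity on `[0,∞)`. -/
noncomputable def omega2 (f : ℝ → ℝ) (δ : ℝ) : ℝ :=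
  sSup {y | ∃ h x : ℝ, 0 < h ∧ h ≤ δ ∧ 0 ≤ x ∧ y = |f (x + 2 * h) - 2 * f (x + h) + f x|}

/-- Weighted modulus of continuity `Ω(f;δ)`. -/
noncomputable def OmegaW (f : ℝ → ℝ) (δ : ℝ) : ℝ :=
  sSup {y | ∃ h x : ℝ, 0 < h ∧ h ≤ δ ∧ 0 ≤ x ∧
    y = |f (x + h) - f x| / ((1 + h ^ 2) * (1 + x ^ 2))}

/-! With `g x = f x / (1 + x²)`, the function `g` is continuous on `[0,∞)` with a limit at `∞`,
hence uniformly continuous there, and `|g| ≤ M`. Splitting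
`f (x+h) - f x = (g (x+h) - g x) (1 + (x+h)²) + g x ((x+h)² - x²)` gives
`Ω(f;δ) ≤ 2 ω₁(g;δ) + 2Mδ`, and both terms vanish as `δ → 0⁺`. -/

open Set Topology NNReal

theorem ContinuousOn.uniformContinuousOn_Ici_zero_of_tendsto {β : Type*} [UniformSpace β]
    {g : ℝ → β} {l : β} (hg : ContinuousOn g (Ici 0)) (hl : Tendsto g atTop (𝓝 l)) :
    UniformContinuousOn g (Ici 0) := by
  have hcont : Continuous (fun x : ℝ≥0 => g x) :=
    hg.comp_continuous NNReal.continuous_coe fun x => x.2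
  have htends : Tendsto (fun x : ℝ≥0 => g x) (cocompact ℝ≥0) (𝓝 l) :=
    (hl.comp (NNReal.tendsto_coe_atTop.2 tendsto_id)).mono_left cocompact_le_atTop
  rw [uniformContinuousOn_iff_restrict]
  exact hcont.uniformContinuous_of_tendsto_cocompact htends

theorem omega1_nonneg (g : ℝ → ℝ) (δ : ℝ) : 0 ≤ omega1 g δ :=
  Real.sSup_nonneg <| by rintro _ ⟨h, x, -, -, -, rfl⟩; positivity

theorem OmegaW_nonneg (f : ℝ → ℝ) (δ : ℝ) : 0 ≤ OmegaW f δ :=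
  Real.sSup_nonneg <| by rintro _ ⟨h, x, -, -, -, rfl⟩; positivity

theorem UniformContinuousOn.tendsto_omega1_zero {g : ℝ → ℝ}
    (hg : UniformContinuousOn g (Ici 0)) :
    Tendsto (omega1 g) (𝓝[>] 0) (𝓝 0) := by
  rw [Metric.tendsto_nhdsWithin_nhds]
  intro ε hε
  obtain ⟨δ₀, hδ₀, hg⟩ := Metric.uniformContinuousOn_iff_le.1 hg (ε / 2) (half_pos hε)
  refine ⟨δ₀, hδ₀, fun δ (hδ : 0 < δ) hδδ₀ => ?_⟩
  rw [Real.dist_0_eq_abs, abs_of_pos hδ] at hδδ₀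
  have hle : omega1 g δ ≤ ε / 2 := by
    refine csSup_le ⟨_, δ, 0, hδ, le_rfl, le_rfl, rfl⟩ ?_
    rintro _ ⟨h, x, hh, hhδ, hx, rfl⟩
    refine hg (x + h) (by simp only [mem_Ici]; linarith) x hx ?_
    rw [Real.dist_eq, add_sub_cancel_left, abs_of_pos hh]
    linarith
  rw [Real.dist_0_eq_abs, abs_of_nonneg (omega1_nonneg g δ)]
  linarith

theorem abs_div_one_add_sq_le {a x M : ℝ} (ha : |a| ≤ M * (1 + x ^ 2)) :
    |a / (1 + x ^ 2)| ≤ M := by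
  rw [abs_div, abs_of_pos (by positivity : (0 : ℝ) < 1 + x ^ 2), div_le_iff₀ (by positivity)]
  exact ha

theorem abs_sub_div_weight_le {a b x h M : ℝ} (hb : |b| ≤ M * (1 + x ^ 2)) (hx : 0 ≤ x)
    (hh : 0 ≤ h) :
    |a - b| / ((1 + h ^ 2) * (1 + x ^ 2)) ≤
      2 * |a / (1 + (x + h) ^ 2) - b / (1 + x ^ 2)| + 2 * M * h := by
  set u := a / (1 + (x + h) ^ 2)
  set v := b / (1 + x ^ 2)
  have hv : |v| ≤ M := abs_div_one_add_sq_le hb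
  have hD : 0 < (1 + h ^ 2) * (1 + x ^ 2) := by positivity
  have hsplit : a - b = (u - v) * (1 + (x + h) ^ 2) + v * (2 * x * h + h ^ 2) := by
    simp only [u, v]; field_simp; ring
  have hweight_shift : 1 + (x + h) ^ 2 ≤ 2 * ((1 + h ^ 2) * (1 + x ^ 2)) := by
    nlinarith [sq_nonneg (x - h), sq_nonneg (x * h)]
  have hsq_sub_sq : 2 * x * h + h ^ 2 ≤ 2 * h * ((1 + h ^ 2) * (1 + x ^ 2)) := by
    nlinarith [mul_nonneg hh (sq_nonneg (x - 1)), mul_nonneg hh (sq_nonneg (h - 1)),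
      mul_nonneg (mul_nonneg hh (sq_nonneg h)) (sq_nonneg x)]
  rw [div_le_iff₀ hD]
  calc |a - b| ≤ |u - v| * (1 + (x + h) ^ 2) + |v| * (2 * x * h + h ^ 2) := by
        rw [hsplit]
        refine (abs_add_le _ _).trans_eq ?_
        rw [abs_mul, abs_mul, abs_of_pos (by positivity : (0 : ℝ) < 1 + (x + h) ^ 2),
          abs_of_nonneg (by positivity : 0 ≤ 2 * x * h + h ^ 2)]
    _ ≤ |u - v| * (2 * ((1 + h ^ 2) * (1 + x ^ 2))) +
          M * (2 * h * ((1 + h ^ 2) * (1 + x ^ 2))) := by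
        gcongr
        exact (abs_nonneg v).trans hv
    _ = (2 * |u - v| + 2 * M * h) * ((1 + h ^ 2) * (1 + x ^ 2)) := by ring

theorem OmegaW_le_two_mul_omega1_add {f : ℝ → ℝ} {M δ : ℝ}
    (hM : ∀ x, 0 ≤ x → |f x| ≤ M * (1 + x ^ 2)) (hδ : 0 < δ) :
    OmegaW f δ ≤ 2 * omega1 (fun x => f x / (1 + x ^ 2)) δ + 2 * M * δ := by
  have hbdd : BddAbove {y | ∃ h x : ℝ, 0 < h ∧ h ≤ δ ∧ 0 ≤ x ∧
      y = |f (x + h) / (1 + (x + h) ^ 2) - f x / (1 + x ^ 2)|} := by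
    refine ⟨2 * M, ?_⟩
    rintro _ ⟨h, x, hh, -, hx, rfl⟩
    have h₁ := abs_div_one_add_sq_le (hM (x + h) (by linarith))
    have h₂ := abs_div_one_add_sq_le (hM x hx)
    linarith [abs_sub (f (x + h) / (1 + (x + h) ^ 2)) (f x / (1 + x ^ 2))]
  refine csSup_le ⟨_, δ, 0, hδ, le_rfl, le_rfl, rfl⟩ ?_
  rintro _ ⟨h, x, hh, hhδ, hx, rfl⟩
  have hMnn : 0 ≤ M := (abs_nonneg _).trans (abs_div_one_add_sq_le (hM x hx))
  calc |f (x + h) - f x| / ((1 + h ^ 2) * (1 + x ^ 2))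
      ≤ 2 * |f (x + h) / (1 + (x + h) ^ 2) - f x / (1 + x ^ 2)| + 2 * M * h :=
        abs_sub_div_weight_le (hM x hx) hx hh.le
    _ ≤ 2 * omega1 (fun x => f x / (1 + x ^ 2)) δ + 2 * M * δ := by
        gcongr
        exact le_csSup hbdd ⟨h, x, hh, hhδ, hx, rfl⟩

theorem OmegaW_tendsto_zero (f : ℝ → ℝ) (hf : ContinuousOn f (Set.Ici 0))
    (hgrowth : ∃ Mf : ℝ, ∀ x : ℝ, 0 ≤ x → |f x| ≤ Mf * (1 + x ^ 2))
    (hlim : ∃ l : ℝ, Tendsto (fun x : ℝ => f x / (1 + x ^ 2)) atTop (nhds l)) :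
    Tendsto (fun δ : ℝ => OmegaW f δ) (nhdsWithin 0 (Set.Ioi 0)) (nhds 0) := by
  obtain ⟨M, hM⟩ := hgrowth
  obtain ⟨l, hl⟩ := hlim
  have hg : UniformContinuousOn (fun x => f x / (1 + x ^ 2)) (Ici 0) :=
    (hf.div (by fun_prop) fun x _ => by positivity).uniformContinuousOn_Ici_zero_of_tendsto hl
  have hupper : Tendsto (fun δ => 2 * omega1 (fun x => f x / (1 + x ^ 2)) δ + 2 * M * δ)
      (𝓝[>] 0) (𝓝 0) := by
    have hid : Tendsto (fun δ : ℝ => δ) (𝓝[>] 0) (𝓝 0) := nhdsWithin_le_nhds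
    simpa using (hg.tendsto_omega1_zero.const_mul 2).add (hid.const_mul (2 * M))
  exact squeeze_zero' (Eventually.of_forall (OmegaW_nonneg f))
    (eventually_nhdsWithin_of_forall fun δ hδ => OmegaW_le_two_mul_omega1_add hM hδ) hupper
end
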